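/- Let G̃ be a graph with vertex set V₁ ∪ {s₁} ∪ V₂ ∪ {s₂} such that: the adjacencies between V₁ and V₂ are given by an arbitrary edge set E ⊆ V₁ × V₂; s₁ is adjacent to every vertex of V₁ and to s₂; s₂ is adjacent to every vertex of V₂ and to s₁; there are no other edges. Fix any vertex k₀ ∈ V₂ that is a neighbor of s₂. Then applying the operation G ↦ τ_{k₀}( τ_{s₂}( τ_{k₀}(G) ) − s₂ ) followed by the analogous X-measurement pattern at s₁ (with an appropriate neighbor as special vertex) yields the bipartite complement graph on V₁ ∪ V₂: vᵢ ∈ V₁ and vⱼ ∈ V₂ adjacent iff (vᵢ, vⱼ) ∉ E, with no intra-part edges. -/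

import Mathlib

/-!
An X-measurement at `a` with special neighbour `b ~ a` isolates `a`, gives `b` the old
neighbourhood of `a`, and toggles exactly those pairs `{x, y}` (both different from `a`, `b`)
for which exactly one of `x ~ a ∧ y ~ b`, `x ~ b ∧ y ~ a` holds. Measuring `s₂` with `k₀`
therefore makes `k₀` the hub of `V₂ ∪ {s₁}`, adds the column `E(·, k₀)` to the `V₁`–`V₂`
adjacencies and leaves `s₁` adjacent to the vertices of `V₁` that are not adjacent to `k₀`.
Measuring `s₁` with `k₀` toggles the `V₁`–`V₂` adjacencies once more along exactly those
vertices, which turns `E` into its complement, and hands `k₀` the neighbourhood of `s₁`, which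
is its neighbourhood in the complement.
-/

/-- Local complementation of `G` at vertex `v`: adjacency between distinct
vertices `x, y` is toggled iff both are neighbors of `v`. -/
def localComp {V : Type*} (G : SimpleGraph V) (v : V) : SimpleGraph V where
  Adj x y := x ≠ y ∧ ¬(G.Adj x y ↔ (G.Adj v x ∧ G.Adj v y))
  symm := by
    constructor
    intro x y ⟨hxy, h⟩
    refine ⟨hxy.symm, ?_⟩
    rwa [G.adj_comm y x, and_comm]
  loopless := by
    constructor
    intro x ⟨h, _⟩
    exact h rfl

/-- Deletion of vertex `w`: remove all edges incident to `w`. -/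
def deleteVert {V : Type*} (G : SimpleGraph V) (w : V) : SimpleGraph V where
  Adj x y := G.Adj x y ∧ x ≠ w ∧ y ≠ w
  symm := ⟨fun x y ⟨h, hx, hy⟩ => ⟨h.symm, hy, hx⟩⟩
  loopless := ⟨fun x ⟨h, _, _⟩ => G.irrefl h⟩

/-- Graph operation of Pauli-X measurement at `a` with special neighbor `k0`:
`τ_{k0}( τ_a( τ_{k0}(G) ) − a )`. -/
def xMeas {V : Type*} (G : SimpleGraph V) (a k0 : V) : SimpleGraph V :=
  localComp (deleteVert (localComp (localComp G k0) a) a) k0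

section GraphOperations

variable {V : Type*} {G : SimpleGraph V} {a b u v x y : V}

theorem localComp_adj_of_ne (h : x ≠ y) :
    (localComp G v).Adj x y ↔ Xor (G.Adj x y) (G.Adj v x ∧ G.Adj v y) := by
  simp only [localComp, ne_eq, h, not_false_eq_true, true_and, xor_iff_not_iff]

theorem localComp_adj_left_of_adj (hab : G.Adj a b) (hu : u ≠ a) :
    (localComp G b).Adj a u ↔ Xor (G.Adj a u) (G.Adj b u) := by
  simp [localComp_adj_of_ne hu.symm, hab.symm]

theorem deleteVert_localComp_localComp_adj (hab : G.Adj a b) (hua : u ≠ a) (hub : u ≠ b) :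
    (deleteVert (localComp (localComp G b) a) a).Adj b u ↔ G.Adj a u := by
  have hba := (G.ne_of_adj hab).symm
  simp only [deleteVert, localComp_adj_of_ne hub.symm, localComp_adj_left_of_adj hab hua,
    localComp_adj_left_of_adj hab hba, SimpleGraph.irrefl]
  grind

theorem not_xMeas_adj_left : ¬(xMeas G a b).Adj a y := by
  simp [xMeas, localComp, deleteVert]

theorem not_xMeas_adj_right : ¬(xMeas G a b).Adj y a :=
  fun h => not_xMeas_adj_left h.symm

theorem xMeas_adj_right (hab : G.Adj a b) (hya : y ≠ a) (hyb : y ≠ b) :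
    (xMeas G a b).Adj b y ↔ G.Adj a y := by
  simp [xMeas, localComp_adj_of_ne hyb.symm, deleteVert_localComp_localComp_adj hab hya hyb, xor_def]

theorem xMeas_adj_of_ne (hab : G.Adj a b) (hxa : x ≠ a) (hxb : x ≠ b) (hya : y ≠ a) (hyb : y ≠ b) :
    (xMeas G a b).Adj x y ↔
      Xor (G.Adj x y) (Xor (G.Adj a x ∧ G.Adj b y) (G.Adj b x ∧ G.Adj a y)) := by
  by_cases hxy : x = y
  · subst hxy
    simp [and_comm]
  have hH : (deleteVert (localComp (localComp G b) a) a).Adj x y ↔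
      Xor (Xor (G.Adj x y) (G.Adj b x ∧ G.Adj b y))
        (Xor (G.Adj a x) (G.Adj b x) ∧ Xor (G.Adj a y) (G.Adj b y)) := by
    simp only [deleteVert, localComp_adj_of_ne hxy, localComp_adj_left_of_adj hab hxa,
      localComp_adj_left_of_adj hab hya, ne_eq, hxa, hya, not_false_eq_true, and_true]
  rw [xMeas, localComp_adj_of_ne hxy, hH, deleteVert_localComp_localComp_adj hab hxa hxb,
    deleteVert_localComp_localComp_adj hab hya hyb]
  grind

end GraphOperations

structure IsInterQLAN {V : Type*} (G : SimpleGraph V) (V1 V2 : Set V) (s1 s2 : V)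
    (E : V → V → Prop) : Prop where
  adj_iff : ∀ x y, G.Adj x y ↔
    (x ∈ V1 ∧ y ∈ V2 ∧ E x y) ∨ (y ∈ V1 ∧ x ∈ V2 ∧ E y x) ∨
    (x = s1 ∧ y ∈ V1) ∨ (y = s1 ∧ x ∈ V1) ∨
    (x = s2 ∧ y ∈ V2) ∨ (y = s2 ∧ x ∈ V2) ∨
    (x = s1 ∧ y = s2) ∨ (x = s2 ∧ y = s1)
  disjoint : Disjoint V1 V2
  s1_notMem : s1 ∉ V1 ∪ V2
  s2_notMem : s2 ∉ V1 ∪ V2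

namespace IsInterQLAN

variable {V : Type*} {G : SimpleGraph V} {V1 V2 : Set V} {s1 s2 k x y : V} {E : V → V → Prop}

theorem s1_ne_s2 (hG : IsInterQLAN G V1 V2 s1 s2 E) : s1 ≠ s2 :=
  G.ne_of_adj ((hG.adj_iff s1 s2).2 (by simp))

theorem adj_s1_iff (hG : IsInterQLAN G V1 V2 s1 s2 E) : G.Adj s1 y ↔ y ∈ V1 ∨ y = s2 := by
  have hs1 := hG.s1_notMem
  have hs12 := hG.s1_ne_s2
  rw [hG.adj_iff]
  grind

theorem adj_s2_iff (hG : IsInterQLAN G V1 V2 s1 s2 E) : G.Adj s2 y ↔ y ∈ V2 ∨ y = s1 := by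
  have hs2 := hG.s2_notMem
  have hs12 := hG.s1_ne_s2
  rw [hG.adj_iff]
  grind

theorem adj_of_mem_right (hG : IsInterQLAN G V1 V2 s1 s2 E) (hk : k ∈ V2) :
    G.Adj k y ↔ y = s2 ∨ (y ∈ V1 ∧ E y k) := by
  have hs1 := hG.s1_notMem
  have hs2 := hG.s2_notMem
  have hkV1 := Set.disjoint_right.mp hG.disjoint hk
  rw [hG.adj_iff]
  grind

theorem adj_of_ne (hG : IsInterQLAN G V1 V2 s1 s2 E) (hx1 : x ≠ s1) (hx2 : x ≠ s2)
    (hy1 : y ≠ s1) (hy2 : y ≠ s2) :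
    G.Adj x y ↔ (x ∈ V1 ∧ y ∈ V2 ∧ E x y) ∨ (y ∈ V1 ∧ x ∈ V2 ∧ E y x) := by
  rw [hG.adj_iff]
  grind

theorem adj_s2_of_mem (hG : IsInterQLAN G V1 V2 s1 s2 E) (hk : k ∈ V2) : G.Adj s2 k :=
  hG.adj_s2_iff.2 (Or.inl hk)

theorem ne_s1_of_mem_right (hG : IsInterQLAN G V1 V2 s1 s2 E) (hk : k ∈ V2) : k ≠ s1 :=
  fun h => hG.s1_notMem (Or.inr (h ▸ hk))

theorem xMeas_adj_s1 (hG : IsInterQLAN G V1 V2 s1 s2 E) (hk : k ∈ V2) (hy : y ≠ k) :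
    (xMeas G s2 k).Adj s1 y ↔ y ∈ V1 ∧ ¬E y k := by
  have hs1 := hG.s1_notMem
  have hs2 := hG.s2_notMem
  have hs12 := hG.s1_ne_s2
  by_cases hy2 : y = s2
  · subst hy2
    grind [not_xMeas_adj_right]
  rw [xMeas_adj_of_ne (hG.adj_s2_of_mem hk) hs12 (hG.ne_s1_of_mem_right hk).symm hy2 hy, hG.adj_s1_iff,
    hG.adj_s2_iff, hG.adj_s2_iff, hG.adj_of_mem_right hk, hG.adj_of_mem_right hk]
  grind

theorem xMeas_adj_special (hG : IsInterQLAN G V1 V2 s1 s2 E) (hk : k ∈ V2) (hy : y ≠ k) :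
    (xMeas G s2 k).Adj k y ↔ y ∈ V2 ∨ y = s1 := by
  have hs2 := hG.s2_notMem
  by_cases hy2 : y = s2
  · subst hy2
    grind [not_xMeas_adj_right, hG.s1_ne_s2]
  rw [xMeas_adj_right (hG.adj_s2_of_mem hk) hy2 hy, hG.adj_s2_iff]

theorem xMeas_adj_of_ne (hG : IsInterQLAN G V1 V2 s1 s2 E) (hk : k ∈ V2)
    (hx1 : x ≠ s1) (hx2 : x ≠ s2) (hxk : x ≠ k) (hy1 : y ≠ s1) (hy2 : y ≠ s2) (hyk : y ≠ k) :
    (xMeas G s2 k).Adj x y ↔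
      (x ∈ V1 ∧ y ∈ V2 ∧ Xor (E x y) (E x k)) ∨ (y ∈ V1 ∧ x ∈ V2 ∧ Xor (E y x) (E y k)) := by
  have hx : x ∈ V1 → x ∉ V2 := fun h => Set.disjoint_left.mp hG.disjoint h
  have hy : y ∈ V1 → y ∉ V2 := fun h => Set.disjoint_left.mp hG.disjoint h
  rw [_root_.xMeas_adj_of_ne (hG.adj_s2_of_mem hk) hx2 hxk hy2 hyk, hG.adj_of_ne hx1 hx2 hy1 hy2,
    hG.adj_s2_iff, hG.adj_s2_iff, hG.adj_of_mem_right hk, hG.adj_of_mem_right hk]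
  grind

theorem xMeas_adj_s1_special (hG : IsInterQLAN G V1 V2 s1 s2 E) (hk : k ∈ V2) :
    (xMeas G s2 k).Adj s1 k :=
  ((hG.xMeas_adj_special hk (hG.ne_s1_of_mem_right hk).symm).2 (Or.inr rfl)).symm

theorem xMeas_xMeas_adj_special (hG : IsInterQLAN G V1 V2 s1 s2 E) (hk : k ∈ V2) (hy : y ≠ k) :
    (xMeas (xMeas G s2 k) s1 k).Adj k y ↔ y ∈ V1 ∧ ¬E y k := by
  by_cases hy1 : y = s1
  · subst hy1
    have hs1 := hG.s1_notMem
    grind [not_xMeas_adj_right]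
  rw [xMeas_adj_right (hG.xMeas_adj_s1_special hk) hy1 hy, hG.xMeas_adj_s1 hk hy]

theorem xMeas_xMeas_adj_of_ne (hG : IsInterQLAN G V1 V2 s1 s2 E) (hk : k ∈ V2)
    (hx1 : x ≠ s1) (hxk : x ≠ k) (hy1 : y ≠ s1) (hyk : y ≠ k) :
    (xMeas (xMeas G s2 k) s1 k).Adj x y ↔
      (x ∈ V1 ∧ y ∈ V2 ∧ ¬E x y) ∨ (y ∈ V1 ∧ x ∈ V2 ∧ ¬E y x) := by
  have hs2 := hG.s2_notMem
  have hx : x ∈ V1 → x ∉ V2 := fun h => Set.disjoint_left.mp hG.disjoint h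
  have hy : y ∈ V1 → y ∉ V2 := fun h => Set.disjoint_left.mp hG.disjoint h
  rw [_root_.xMeas_adj_of_ne (hG.xMeas_adj_s1_special hk) hx1 hxk hy1 hyk, hG.xMeas_adj_s1 hk hxk,
    hG.xMeas_adj_s1 hk hyk, hG.xMeas_adj_special hk hxk, hG.xMeas_adj_special hk hyk]
  by_cases hx2 : x = s2
  · subst hx2
    grind [not_xMeas_adj_left]
  by_cases hy2 : y = s2
  · subst hy2
    grind [not_xMeas_adj_right]
  rw [hG.xMeas_adj_of_ne hk hx1 hx2 hxk hy1 hy2 hyk]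
  grind

end IsInterQLAN

theorem xMeas_local_supernodes_yields_bipartite_complement_general {V : Type*}
    (V1 V2 : Set V) (s1 s2 : V) (E : V → V → Prop) (G : SimpleGraph V)
    (hdisj : Disjoint V1 V2)
    (hs1 : s1 ∉ V1 ∪ V2) (hs2 : s2 ∉ V1 ∪ V2)
    (hG : ∀ x y, G.Adj x y ↔
      (x ∈ V1 ∧ y ∈ V2 ∧ E x y) ∨ (y ∈ V1 ∧ x ∈ V2 ∧ E y x) ∨
      (x = s1 ∧ y ∈ V1) ∨ (y = s1 ∧ x ∈ V1) ∨
      (x = s2 ∧ y ∈ V2) ∨ (y = s2 ∧ x ∈ V2) ∨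
      (x = s1 ∧ y = s2) ∨ (x = s2 ∧ y = s1))
    (k0 : V) (hk0 : k0 ∈ V2) :
    ∀ x y, (xMeas (xMeas G s2 k0) s1 k0).Adj x y ↔
      (x ∈ V1 ∧ y ∈ V2 ∧ ¬ E x y) ∨ (y ∈ V1 ∧ x ∈ V2 ∧ ¬ E y x) := by
  have hQ : IsInterQLAN G V1 V2 s1 s2 E := ⟨hG, hdisj, hs1, hs2⟩
  have hk0V1 : k0 ∉ V1 := Set.disjoint_right.mp hdisj hk0
  intro x y
  by_cases hx1 : x = s1
  · subst hx1
    grind [not_xMeas_adj_left]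
  by_cases hy1 : y = s1
  · subst hy1
    grind [not_xMeas_adj_right]
  by_cases hxk : x = k0
  · rw [hxk]
    by_cases hyk : y = k0
    · simp [hyk, hk0V1]
    rw [hQ.xMeas_xMeas_adj_special hk0 hyk]
    tauto
  by_cases hyk : y = k0
  · rw [hyk, SimpleGraph.adj_comm, hQ.xMeas_xMeas_adj_special hk0 hxk]
    tauto
  exact hQ.xMeas_xMeas_adj_of_ne hk0 hx1 hxk hy1 hyk

/-- Lemma 2 (Case II, Inter-QLAN-like): super-node `s₁` adjacent to all of its
local part `V₁` and to `s₂`; `s₂` adjacent to all of `V₂` and to `s₁`; client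
adjacency given by `E ⊆ V₁ × V₂`. Applying the X-measurement pattern at `s₂`
and then at `s₁`, with special neighbor `k₀ ∈ V₂` (a neighbor of `s₂`), yields
the bipartite complement graph on `V₁ ∪ V₂`. -/
theorem xMeas_local_supernodes_yields_bipartite_complement {V : Type*}
    (V1 V2 : Set V) (s1 s2 : V) (E : V → V → Prop) (G : SimpleGraph V)
    (hdisj : Disjoint V1 V2) (hV1 : V1.Nonempty) (hV2 : V2.Nonempty)
    (hs1 : s1 ∉ V1 ∪ V2) (hs2 : s2 ∉ V1 ∪ V2) (hs12 : s1 ≠ s2)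
    (hG : ∀ x y, G.Adj x y ↔
      (x ∈ V1 ∧ y ∈ V2 ∧ E x y) ∨ (y ∈ V1 ∧ x ∈ V2 ∧ E y x) ∨
      (x = s1 ∧ y ∈ V1) ∨ (y = s1 ∧ x ∈ V1) ∨
      (x = s2 ∧ y ∈ V2) ∨ (y = s2 ∧ x ∈ V2) ∨
      (x = s1 ∧ y = s2) ∨ (x = s2 ∧ y = s1))
    (k0 : V) (hk0 : k0 ∈ V2) (hk0s2 : G.Adj s2 k0) :
    ∀ x y, (xMeas (xMeas G s2 k0) s1 k0).Adj x y ↔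
      (x ∈ V1 ∧ y ∈ V2 ∧ ¬ E x y) ∨ (y ∈ V1 ∧ x ∈ V2 ∧ ¬ E y x) :=
  xMeas_local_supernodes_yields_bipartite_complement_general V1 V2 s1 s2 E G hdisj hs1 hs2 hG k0 hk0
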